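/- arXiv:2111.05975 — 3 statements merged into one kernel-verified Lean document; each statement's English description precedes it below -/
import Mathlib

section
/- A uniform space is compact if and only if it is Bourbaki-bounded and Bourbaki-complete. -/
open Filter Set

/-- The star of a set `A` with respect to a family of sets. -/
def starSet {X : Type*} (U : Set (Set X)) (A : Set X) : Set X :=
  ⋃ V ∈ {V ∈ U | (V ∩ A).Nonempty}, V

/-- Iterated star: `iterStar U A 0 = A`, `iterStar U A (m+1) = starSet U (iterStar U A m)`. -/
def iterStar {X : Type*} (U : Set (Set X)) (A : Set X) : ℕ → Set X
  | 0 => A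
  | m + 1 => starSet U (iterStar U A m)

/-- A family of sets is a uniform cover of a uniform space if it is refined by the
cover of balls of some entourage. -/
def IsUniformCover {X : Type*} [UniformSpace X] (U : Set (Set X)) : Prop :=
  ∃ V ∈ uniformity X, ∀ x : X, ∃ W ∈ U, UniformSpace.ball x V ⊆ W

/-- `B` is Bourbaki-bounded in a uniform space: every uniform cover has finitely many
members whose iterated stars cover `B`. -/
def IsBourbakiBoundedIn {X : Type*} [UniformSpace X] (B : Set X) : Prop :=
  ∀ U : Set (Set X), IsUniformCover U →
    ∃ m : ℕ, ∃ s : Set (Set X), s ⊆ U ∧ s.Finite ∧ B ⊆ ⋃ W ∈ s, iterStar U W m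

/-- A filter on a uniform space is Bourbaki-Cauchy if for every uniform cover some
iterated star of a member of the cover belongs to the filter. -/
def BourbakiCauchyFilter {X : Type*} [UniformSpace X] (F : Filter X) : Prop :=
  ∀ U : Set (Set X), IsUniformCover U → ∃ m : ℕ, ∃ W ∈ U, iterStar U W m ∈ F

/-- A uniform space is Bourbaki-complete if every (proper) Bourbaki-Cauchy filter
has a cluster point. -/
def BourbakiComplete (X : Type*) [UniformSpace X] : Prop :=
  ∀ F : Filter X, F.NeBot → BourbakiCauchyFilter F → ∃ x : X, ClusterPt x F

/-!
In a compact space finitely many balls of an entourage already cover (no stars needed, `m = 0`),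
and every filter clusters. Conversely, an ultrafilter contains one of the finitely many iterated
stars covering a Bourbaki-bounded space, so it is Bourbaki-Cauchy, and Bourbaki-completeness
gives it a cluster point.
-/

theorem TotallyBounded.isBourbakiBoundedIn {X : Type*} [UniformSpace X] {s : Set X}
    (hs : TotallyBounded s) : IsBourbakiBoundedIn s := by
  rintro U ⟨V, hV, hball⟩
  obtain ⟨t, htf, hcov⟩ := hs _ (tendsto_swap_uniformity hV)
  choose W hWU hWball using hball
  refine ⟨0, W '' t, image_subset_iff.2 fun y _ => hWU y, htf.image W, fun x hx => ?_⟩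
  obtain ⟨y, hy, hxy⟩ := mem_iUnion₂.1 (hcov hx)
  exact mem_iUnion₂.2 ⟨W y, mem_image_of_mem W hy, hWball y hxy⟩

theorem bourbakiComplete_of_compactSpace (X : Type*) [UniformSpace X] [CompactSpace X] :
    BourbakiComplete X := fun F _ _ =>
  let ⟨x, _, hx⟩ := isCompact_univ.exists_clusterPt (f := F) (le_principal_iff.2 univ_mem)
  ⟨x, hx⟩

theorem Ultrafilter.bourbakiCauchyFilter_of_isBourbakiBoundedIn {X : Type*} [UniformSpace X]
    {s : Set X} (hs : IsBourbakiBoundedIn s) (f : Ultrafilter X) (hsf : s ∈ f) :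
    BourbakiCauchyFilter (f : Filter X) := by
  intro U hU
  obtain ⟨m, t, htU, htf, hcov⟩ := hs U hU
  obtain ⟨W, hWt, hWf⟩ := (Ultrafilter.finite_biUnion_mem_iff htf).1 (mem_of_superset hsf hcov)
  exact ⟨m, W, htU hWt, hWf⟩

/-- A uniform space is compact iff it is Bourbaki-bounded and Bourbaki-complete. -/
theorem compact_iff_bourbakiBounded_and_bourbakiComplete
    (X : Type*) [UniformSpace X] :
    CompactSpace X ↔ IsBourbakiBoundedIn (Set.univ : Set X) ∧ BourbakiComplete X := by
  constructor
  · intro _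
    exact ⟨isCompact_univ.totallyBounded.isBourbakiBoundedIn, bourbakiComplete_of_compactSpace X⟩
  · rintro ⟨hbounded, hcomplete⟩
    refine ⟨isCompact_iff_ultrafilter_le_nhds.2 fun f _ => ?_⟩
    obtain ⟨x, hx⟩ := hcomplete f f.neBot
      (f.bourbakiCauchyFilter_of_isBourbakiBoundedIn hbounded univ_mem)
    exact ⟨x, mem_univ x, Ultrafilter.clusterPt_iff.1 hx⟩
end

section
/- A nonempty product of uniform spaces (with the product uniformity) is Bourbaki-complete if and only if each factor is Bourbaki-complete. -/
/-!
Each factor `X i` is a uniform retract of the product: `x ↦ Function.update p i x` is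
uniformly continuous and the projection undoes it, and Bourbaki-completeness passes to
retracts. Conversely, it suffices that Bourbaki-Cauchy ultrafilters converge; the
projections of such an ultrafilter on the product are Bourbaki-Cauchy ultrafilters on the
factors, hence converge, so the ultrafilter converges coordinatewise.
-/

open Filter Set

open Topology

section Star

variable {X Y : Type*}

theorem starSet_mono (U : Set (Set X)) {A B : Set X} (h : A ⊆ B) :
    starSet U A ⊆ starSet U B := by
  simp only [starSet, mem_sep_iff]
  exact biUnion_mono (fun V ⟨hVU, hVA⟩ => ⟨hVU, hVA.mono (inter_subset_inter_right V h)⟩)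
    fun _ _ => subset_rfl

theorem starSet_preimage_subset (f : X → Y) (U : Set (Set Y)) (A : Set Y) :
    starSet ((f ⁻¹' ·) '' U) (f ⁻¹' A) ⊆ f ⁻¹' starSet U A := by
  intro x hx
  simp only [starSet, mem_iUnion, exists_prop, mem_sep_iff, mem_preimage] at hx ⊢
  obtain ⟨_, ⟨⟨W, hWU, rfl⟩, z, hzW, hzA⟩, hxW⟩ := hx
  exact ⟨W, ⟨hWU, f z, hzW, hzA⟩, hxW⟩

theorem iterStar_preimage_subset (f : X → Y) (U : Set (Set Y)) (A : Set Y) :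
    ∀ m, iterStar ((f ⁻¹' ·) '' U) (f ⁻¹' A) m ⊆ f ⁻¹' iterStar U A m
  | 0 => subset_rfl
  | m + 1 => (starSet_mono _ (iterStar_preimage_subset f U A m)).trans
      (starSet_preimage_subset f U _)

end Star

theorem IsUniformCover.preimage {X Y : Type*} [UniformSpace X] [UniformSpace Y]
    {f : X → Y} (hf : UniformContinuous f) {U : Set (Set Y)} (hU : IsUniformCover U) :
    IsUniformCover ((f ⁻¹' ·) '' U) := by
  obtain ⟨V, hV, hball⟩ := hU
  refine ⟨(fun p : X × X => (f p.1, f p.2)) ⁻¹' V, hf hV, fun x => ?_⟩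
  obtain ⟨W, hWU, hW⟩ := hball (f x)
  exact ⟨f ⁻¹' W, mem_image_of_mem _ hWU, fun _ hy => hW hy⟩

namespace BourbakiCauchyFilter

variable {X Y : Type*} [UniformSpace X] [UniformSpace Y]

theorem mono {F G : Filter X} (hF : BourbakiCauchyFilter F) (hle : G ≤ F) :
    BourbakiCauchyFilter G := by
  intro U hU
  obtain ⟨m, W, hWU, hmem⟩ := hF U hU
  exact ⟨m, W, hWU, hle hmem⟩

theorem map {F : Filter X} (hF : BourbakiCauchyFilter F) {f : X → Y}
    (hf : UniformContinuous f) : BourbakiCauchyFilter (F.map f) := by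
  intro U hU
  obtain ⟨m, _, ⟨W, hWU, rfl⟩, hmem⟩ := hF _ (hU.preimage hf)
  exact ⟨m, W, hWU, mem_map.mpr (mem_of_superset hmem (iterStar_preimage_subset f U W m))⟩

end BourbakiCauchyFilter

theorem bourbakiComplete_iff_ultrafilter {X : Type*} [UniformSpace X] :
    BourbakiComplete X ↔
      ∀ G : Ultrafilter X, BourbakiCauchyFilter (G : Filter X) →
        ∃ x, (G : Filter X) ≤ 𝓝 x := by
  constructor
  · intro h G hG
    obtain ⟨x, hx⟩ := h G G.neBot hG
    exact ⟨x, Ultrafilter.clusterPt_iff.mp hx⟩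
  · intro h F hne hF
    obtain ⟨x, hx⟩ := h (Ultrafilter.of F) (hF.mono (Ultrafilter.of_le F))
    exact ⟨x, (ClusterPt.of_le_nhds hx).mono (Ultrafilter.of_le F)⟩

theorem BourbakiComplete.of_leftInverse {X Y : Type*} [UniformSpace X] [UniformSpace Y]
    {f : X → Y} {g : Y → X} (hf : UniformContinuous f)
    (hg : Continuous g) (hgf : Function.LeftInverse g f) (hY : BourbakiComplete Y) :
    BourbakiComplete X := by
  intro F hne hF
  obtain ⟨y, hy⟩ := hY (F.map f) (hne.map f) (hF.map hf)
  have hgy : ClusterPt (g y) ((F.map f).map g) := hy.map hg.continuousAt tendsto_map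
  rw [Filter.map_map, hgf.comp_eq_id, Filter.map_id] at hgy
  exact ⟨g y, hgy⟩

section Pi

variable {ι : Type*} {X : ι → Type*} [∀ i, UniformSpace (X i)]

theorem uniformContinuous_update [DecidableEq ι] (p : ∀ j, X j) (i : ι) :
    UniformContinuous (Function.update p i) := by
  rw [uniformContinuous_pi]
  intro j
  by_cases hj : j = i
  · subst hj
    simp only [Function.update_self]
    exact uniformContinuous_id
  · simpa only [Function.update_of_ne hj] using uniformContinuous_const

theorem BourbakiComplete.of_pi [∀ i, Nonempty (X i)] (h : BourbakiComplete (∀ i, X i))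
    (i : ι) : BourbakiComplete (X i) := by
  classical
  let p : ∀ j, X j := fun _ => Classical.arbitrary _
  exact h.of_leftInverse (uniformContinuous_update p i) (continuous_apply i)
    fun x => Function.update_self i x p

theorem BourbakiComplete.pi (h : ∀ i, BourbakiComplete (X i)) :
    BourbakiComplete (∀ i, X i) := by
  rw [bourbakiComplete_iff_ultrafilter]
  intro G hG
  choose x hx using fun i =>
    bourbakiComplete_iff_ultrafilter.mp (h i) (G.map (· i))
      (hG.map (Pi.uniformContinuous_proj X i))
  exact ⟨x, by rw [nhds_pi, le_pi]; exact hx⟩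

end Pi

/-- A nonempty product of uniform spaces is Bourbaki-complete iff every factor is. -/
theorem prod_bourbakiComplete_iff {ι : Type*} (X : ι → Type*)
    [∀ i, UniformSpace (X i)] [∀ i, Nonempty (X i)] :
    BourbakiComplete (∀ i, X i) ↔ ∀ i, BourbakiComplete (X i) :=
  ⟨fun h i => h.of_pi i, BourbakiComplete.pi⟩
end

section
/- Every uniformly locally compact uniform space is cofinally Bourbaki-complete (hence also Bourbaki-complete and cofinally complete). -/
/-! Let every `V`-ball have compact closure, `W ○ W ⊆ V` and `U ○ U ⊆ W` with `U` symmetric.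
A compact set `K` is covered by finitely many `W`-balls, so its `W`-neighbourhood lies in
finitely many `V`-balls and has compact closure. The star of `A` with respect to the cover by
`U`-balls lies in the `W`-neighbourhood of `closure A`, so starring preserves relative
compactness and every iterated star of a `U`-ball is relatively compact. Every member of a
cofinally Bourbaki-Cauchy filter meets one fixed such iterated star, so the filter clusters in
its compact closure. -/

open Filter Set UniformSpace
open scoped Uniformity SetRel

/-- A filter is cofinally Bourbaki-Cauchy if for every uniform cover some iterated star
of a member of the cover meets every member of the filter. -/
def CofinallyBourbakiCauchyFilter {X : Type*} [UniformSpace X] (F : Filter X) : Prop :=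
  ∀ U : Set (Set X), IsUniformCover U →
    ∃ m : ℕ, ∃ W ∈ U, ∀ S ∈ F, (S ∩ iterStar U W m).Nonempty

/-- A uniform space is cofinally Bourbaki-complete if every (proper) cofinally
Bourbaki-Cauchy filter has a cluster point. -/
def CofinallyBourbakiComplete (X : Type*) [UniformSpace X] : Prop :=
  ∀ F : Filter X, F.NeBot → CofinallyBourbakiCauchyFilter F → ∃ x : X, ClusterPt x F

/-- A filter is cofinally Cauchy if for every uniform cover some member of the cover
meets every member of the filter. -/
def CofinallyCauchyFilter {X : Type*} [UniformSpace X] (F : Filter X) : Prop :=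
  ∀ U : Set (Set X), IsUniformCover U → ∃ W ∈ U, ∀ S ∈ F, (S ∩ W).Nonempty

/-- A uniform space is cofinally complete if every (proper) cofinally Cauchy filter
has a cluster point. -/
def CofinallyComplete (X : Type*) [UniformSpace X] : Prop :=
  ∀ F : Filter X, F.NeBot → CofinallyCauchyFilter F → ∃ x : X, ClusterPt x F

/-- A uniform space is uniformly locally compact if some uniform cover consists of
sets with compact closure. -/
def UniformlyLocallyCompact (X : Type*) [UniformSpace X] : Prop :=
  ∃ U : Set (Set X), IsUniformCover U ∧ ∀ W ∈ U, IsCompact (closure W)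

theorem starSet_range_ball_subset_image {X : Type*} {V : SetRel X X} [V.IsSymm] (A : Set X) :
    starSet (range fun x => ball x V) A ⊆ (V ○ V).image A := by
  intro y hy
  simp only [starSet, mem_iUnion] at hy
  obtain ⟨_, ⟨⟨x, rfl⟩, a, hax, haA⟩, hyx⟩ := hy
  exact ⟨a, haA, mem_comp_of_mem_ball hax hyx⟩

section

variable {X : Type*} [UniformSpace X]

theorem isUniformCover_range_ball {V : SetRel X X} (hV : V ∈ 𝓤 X) :
    IsUniformCover (range fun x => ball x V) :=
  ⟨V, hV, fun x => ⟨ball x V, mem_range_self x, subset_rfl⟩⟩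

theorem IsCompact.isCompact_closure_image {V W : SetRel X X}
    (hV : ∀ x, IsCompact (closure (ball x V))) (hW : W ∈ 𝓤 X) (hWV : W ○ W ⊆ V)
    {K : Set X} (hK : IsCompact K) : IsCompact (closure (W.image K)) := by
  obtain ⟨t, -, hKt⟩ := hK.elim_nhds_subcover (fun i => ball i W) fun i _ => ball_mem_nhds i hW
  have himage : W.image K ⊆ ⋃ i ∈ t, closure (ball i V) := by
    rintro y ⟨a, haK, hay⟩
    obtain ⟨i, hit, hia⟩ := mem_iUnion₂.1 (hKt haK)
    exact mem_iUnion₂.2 ⟨i, hit, subset_closure (hWV (mem_ball_comp hia hay))⟩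
  exact (t.isCompact_biUnion fun i _ => hV i).closure_of_subset himage

theorem exists_mem_uniformity_isCompact_closure_starSet {V : SetRel X X} (hV : V ∈ 𝓤 X)
    (hVc : ∀ x, IsCompact (closure (ball x V))) :
    ∃ U ∈ 𝓤 X, U ⊆ V ∧ ∀ A : Set X, IsCompact (closure A) →
      IsCompact (closure (starSet (range fun x => ball x U) A)) := by
  obtain ⟨W, hW, -, hWV⟩ := comp_symm_mem_uniformity_sets hV
  obtain ⟨U, hU, _, hUW⟩ := comp_symm_mem_uniformity_sets hW
  have hUV : U ⊆ V := (subset_comp_self_of_mem_uniformity hU).trans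
    (hUW.trans ((subset_comp_self_of_mem_uniformity hW).trans hWV))
  refine ⟨U, hU, hUV, fun A hA => ?_⟩
  have hstar : starSet (range fun x => ball x U) A ⊆ SetRel.image W (closure A) :=
    (starSet_range_ball_subset_image A).trans
      (SetRel.image_subset_image_left hUW |>.trans (SetRel.image_subset_image subset_closure))
  exact (hA.isCompact_closure_image hVc hW hWV).closure_of_subset (hstar.trans subset_closure)

theorem isCompact_closure_iterStar {𝒰 : Set (Set X)}
    (h𝒰 : ∀ A, IsCompact (closure A) → IsCompact (closure (starSet 𝒰 A)))
    {A : Set X} (hA : IsCompact (closure A)) : ∀ m, IsCompact (closure (iterStar 𝒰 A m))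
  | 0 => hA
  | m + 1 => h𝒰 _ (isCompact_closure_iterStar h𝒰 hA m)

theorem UniformlyLocallyCompact.exists_isUniformCover_isCompact_closure_iterStar
    (h : UniformlyLocallyCompact X) :
    ∃ 𝒱 : Set (Set X), IsUniformCover 𝒱 ∧ ∀ W ∈ 𝒱, ∀ m, IsCompact (closure (iterStar 𝒱 W m)) := by
  obtain ⟨𝒰, ⟨V, hV, hV𝒰⟩, h𝒰⟩ := h
  have hVc : ∀ x, IsCompact (closure (ball x V)) := fun x => by
    obtain ⟨W, hW𝒰, hxW⟩ := hV𝒰 x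
    exact (h𝒰 W hW𝒰).closure_of_subset (hxW.trans subset_closure)
  obtain ⟨U, hU, hUV, hstar⟩ := exists_mem_uniformity_isCompact_closure_starSet hV hVc
  refine ⟨_, isUniformCover_range_ball hU, ?_⟩
  rintro _ ⟨x, rfl⟩
  exact isCompact_closure_iterStar hstar
    ((hVc x).closure_of_subset ((ball_mono hUV x).trans subset_closure))

theorem CofinallyBourbakiCauchyFilter.exists_clusterPt {F : Filter X}
    (hF : CofinallyBourbakiCauchyFilter F) {𝒱 : Set (Set X)} (h𝒱 : IsUniformCover 𝒱)
    (hc : ∀ W ∈ 𝒱, ∀ m, IsCompact (closure (iterStar 𝒱 W m))) : ∃ x, ClusterPt x F := by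
  obtain ⟨m, W, hW𝒱, hmeet⟩ := hF 𝒱 h𝒱
  have hfreq : ∃ᶠ y in F, y ∈ closure (iterStar 𝒱 W m) := frequently_iff.2 fun hS =>
    (hmeet _ hS).mono (inter_subset_inter_right _ subset_closure)
  obtain ⟨x, -, hx⟩ := (hc W hW𝒱 m).exists_clusterPt_of_frequently hfreq
  exact ⟨x, hx⟩

theorem UniformlyLocallyCompact.cofinallyBourbakiComplete (h : UniformlyLocallyCompact X) :
    CofinallyBourbakiComplete X := fun _ _ hF =>
  let ⟨_, h𝒱, hc⟩ := h.exists_isUniformCover_isCompact_closure_iterStar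
  hF.exists_clusterPt h𝒱 hc

theorem BourbakiCauchyFilter.cofinallyBourbakiCauchyFilter {F : Filter X} [F.NeBot]
    (hF : BourbakiCauchyFilter F) : CofinallyBourbakiCauchyFilter F := fun U hU =>
  let ⟨m, W, hWU, hmem⟩ := hF U hU
  ⟨m, W, hWU, fun _ hS => nonempty_of_mem (inter_mem hS hmem)⟩

theorem CofinallyCauchyFilter.cofinallyBourbakiCauchyFilter {F : Filter X}
    (hF : CofinallyCauchyFilter F) : CofinallyBourbakiCauchyFilter F := fun U hU =>
  let ⟨W, hWU, hmeet⟩ := hF U hU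
  ⟨0, W, hWU, hmeet⟩

theorem CofinallyBourbakiComplete.bourbakiComplete (h : CofinallyBourbakiComplete X) :
    BourbakiComplete X := fun F hF₀ hF => h F hF₀ hF.cofinallyBourbakiCauchyFilter

theorem CofinallyBourbakiComplete.cofinallyComplete (h : CofinallyBourbakiComplete X) :
    CofinallyComplete X := fun F hF₀ hF => h F hF₀ hF.cofinallyBourbakiCauchyFilter

end

/-- Every uniformly locally compact uniform space is cofinally Bourbaki-complete
(hence also Bourbaki-complete and cofinally complete). -/
theorem uniformlyLocallyCompact_implies (X : Type*) [UniformSpace X]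
    (h : UniformlyLocallyCompact X) :
    CofinallyBourbakiComplete X ∧ BourbakiComplete X ∧ CofinallyComplete X :=
  have hX := h.cofinallyBourbakiComplete
  ⟨hX, hX.bourbakiComplete, hX.cofinallyComplete⟩
end
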